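/- For every z* ∈ P(k0) and all z0, z1 ∈ T(z*) with z0 ≤ z1: | ∑_{z ∈ T(z*), z0 ≤ z ≤ z1} ( S(H_z)·r(z)/g(z) − cn_{z*}(z)·r(z) ) | < r(z*). -/

import Mathlib

open scoped Classical
open Finset MeasureTheory

namespace BSHM

noncomputable section

/-- The set of candidate parents of machine type `i`: types `j ∈ M` with `j > i`
and a strictly smaller normalized cost rate per capacity unit. -/
def pset (m : ℕ) (g r : ℕ → ℝ) (i : ℕ) : Set ℕ :=
  {j | j ≤ m ∧ i < j ∧ r j / g j < r i / g i}

/-- The parent `p i` of machine type `i` (equal to `0` when the parent is undefined,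
since any actual parent has index `≥ 2`). -/
def p (m : ℕ) (g r : ℕ → ℝ) (i : ℕ) : ℕ := sInf (pset m g r i)

/-- `pdef i` asserts that the parent of `i` is defined. -/
def pdef (m : ℕ) (g r : ℕ → ℝ) (i : ℕ) : Prop := (pset m g r i).Nonempty

/-- One step of the parent relation: `b` is the (defined) parent of `a`. -/
def pstep (m : ℕ) (g r : ℕ → ℝ) (a b : ℕ) : Prop :=
  pdef m g r a ∧ b = p m g r a

/-- `P i`: the set consisting of `i` together with all of its iterated parents. -/
def P (m : ℕ) (g r : ℕ → ℝ) (i : ℕ) : Set ℕ :=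
  {z | Relation.ReflTransGen (pstep m g r) i z}

/-- `A i`: the set of nodes in the tree rooted at `i`,
i.e. all `z ∈ M` having `i` as an ancestor (or equal to `i`). -/
def A (m : ℕ) (g r : ℕ → ℝ) (i : ℕ) : Set ℕ :=
  {z | 1 ≤ z ∧ z ≤ m ∧ i ∈ P m g r z}

/-- `v i`: the lowest-indexed node in the tree rooted at `i`. -/
def v (m : ℕ) (g r : ℕ → ℝ) (i : ℕ) : ℕ := sInf (A m g r i)

/-- `y i`: the younger siblings of `i` (same parent status, smaller index). -/
def y (m : ℕ) (g r : ℕ → ℝ) (i : ℕ) : Set ℕ :=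
  {z | 1 ≤ z ∧ z ≤ m ∧ z < i ∧ p m g r z = p m g r i}

/-- `esib i`: the elder siblings of `i`. -/
def esib (m : ℕ) (g r : ℕ → ℝ) (i : ℕ) : Set ℕ :=
  {z | 1 ≤ z ∧ z ≤ m ∧ i < z ∧ p m g r z = p m g r i}

/-- `T k := {k} ∪ ⋃_{z ∈ P(k)} y(z)`. -/
def T (m : ℕ) (g r : ℕ → ℝ) (k : ℕ) : Set ℕ :=
  {k} ∪ ⋃ z ∈ P m g r k, y m g r z

/-- `T k` as a `Finset` (all relevant nodes lie in `{k} ∪ [1, m]`). -/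
def TIcc (m : ℕ) (g r : ℕ → ℝ) (k : ℕ) : Finset ℕ :=
  (insert k (Finset.Icc 1 m)).filter (fun z => z ∈ T m g r k)

/-! ### Jobs and one-shot scheduling -/

variable {ι : Type*}

/-- The exact machine type of a job `J`: the least `z ∈ M` with `s J ≤ g z`. -/
def mty (m : ℕ) (g : ℕ → ℝ) (s : ι → ℝ) (J : ι) : ℕ :=
  sInf {z | 1 ≤ z ∧ z ≤ m ∧ s J ≤ g z}

/-- Total size of a finite set of jobs. -/
def Ssum (s : ι → ℝ) (W : Finset ι) : ℝ := ∑ J ∈ W, s J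

/-- `k0f X`: the highest-indexed exact machine type among the jobs of `X`. -/
def k0f (m : ℕ) (g : ℕ → ℝ) (s : ι → ℝ) (X : Finset ι) : ℕ :=
  X.sup (fun J => mty m g s J)

/-- `H z X`: the jobs of `X` whose exact machine type lies in the tree rooted at `z`. -/
def H (m : ℕ) (g r : ℕ → ℝ) (s : ι → ℝ) (z : ℕ) (X : Finset ι) : Finset ι :=
  X.filter (fun J => mty m g s J ∈ A m g r z)

/-- `SH X z := S(H_z(X))`. -/
def SH (m : ℕ) (g r : ℕ → ℝ) (s : ι → ℝ) (X : Finset ι) (z : ℕ) : ℝ :=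
  Ssum s (H m g r s z X)

/-- Feasibility of a machine configuration `w : M → ℕ` for the job set `X`. -/
def Feasible (m : ℕ) (g : ℕ → ℝ) (s : ι → ℝ) (X : Finset ι) (w : ℕ → ℕ) : Prop :=
  ∀ i, 1 ≤ i → i ≤ m →
    Ssum s (X.filter (fun J => i ≤ mty m g s J)) ≤ ∑ z ∈ Finset.Icc i m, (w z : ℝ) * g z

/-- The cost of a machine configuration. -/
def cost (m : ℕ) (r : ℕ → ℝ) (w : ℕ → ℕ) : ℝ :=
  ∑ z ∈ Finset.Icc 1 m, (w z : ℝ) * r z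

/-- The optimal one-shot scheduling cost for a job set `X`. -/
def OPT1 (m : ℕ) (g r : ℕ → ℝ) (s : ι → ℝ) (X : Finset ι) : ℝ :=
  sInf {c : ℝ | ∃ w : ℕ → ℕ, Feasible m g s X w ∧ c = cost m r w}

/-- The fractional machine configuration `cn_{z*}` for the job set `X`, with
highest-indexed machine type `zs`.  A node `i ∈ T(zs) \ {zs}` is the boundary
type `i*` exactly when `∑_{z ∈ T(zs), z > i} S(H_z) ≤ cn(zs)·g(zs) <
∑_{z ∈ T(zs), z ≥ i} S(H_z)`; nodes above the boundary get `0`,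
nodes below it get `S(H_i)/g_i`. -/
def cn (m : ℕ) (g r : ℕ → ℝ) (s : ι → ℝ) (X : Finset ι) (zs i : ℕ) : ℝ :=
  let B : ℝ := (⌈SH m g r s X zs / g zs⌉₊ : ℝ) * g zs
  let Sge : ℝ := ∑ z ∈ (TIcc m g r zs).filter (fun z => i ≤ z), SH m g r s X z
  let Sgt : ℝ := ∑ z ∈ (TIcc m g r zs).filter (fun z => i < z), SH m g r s X z
  if i = zs then (⌈SH m g r s X zs / g zs⌉₊ : ℝ)
  else if i ∈ T m g r zs then
    (if Sgt ≤ B ∧ B < Sge then (Sge - B) / g i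
     else if B < Sgt then SH m g r s X i / g i
     else 0)
  else 0

/-- `cn_{zs}` is decent: for every strict ancestor `zt` of `zs`, the total cost of
the machines of types in `T(zs) ∩ A(zt)` is at most the cost of one type-`zt` machine. -/
def decent (m : ℕ) (g r : ℕ → ℝ) (s : ι → ℝ) (X : Finset ι) (zs : ℕ) : Prop :=
  ∀ zt ∈ P m g r zs, zt ≠ zs →
    (∑ z ∈ (TIcc m g r zs).filter (fun z => z ∈ A m g r zt), cn m g r s X zs z * r z) ≤ r zt

/-- `z⋄(X)`: the least `z* ∈ P(k0(X))` such that `cn_{z*}` is decent. -/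
def zdia (m : ℕ) (g r : ℕ → ℝ) (s : ι → ℝ) (X : Finset ι) : ℕ :=
  sInf {zs | zs ∈ P m g r (k0f m g s X) ∧ decent m g r s X zs}

/-- The child of `zd` whose subtree contains node `k`. -/
def chil (m : ℕ) (g r : ℕ → ℝ) (zd k : ℕ) : ℕ :=
  sInf {i | p m g r i = zd ∧ k ∈ A m g r i}

/-- The node `i ∈ T(zd)` whose subtree contains node `k`. -/
def idxT (m : ℕ) (g r : ℕ → ℝ) (zd k : ℕ) : ℕ :=
  sInf {i | i ∈ T m g r zd ∧ k ∈ A m g r i}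

/-- The children `f(zd)` of node `zd`, as a `Finset`. -/
def fchFin (m : ℕ) (g r : ℕ → ℝ) (zd : ℕ) : Finset ℕ :=
  (Finset.Icc 1 m).filter (fun z => p m g r z = zd)

/-- The cost `r̃(X)(J)` charged to the job `J` of the job set `X`. -/
def charge (m : ℕ) (g r : ℕ → ℝ) (s : ι → ℝ) (X : Finset ι) (J : ι) : ℝ :=
  let zd := zdia m g r s X
  let ρ : ℕ → ℝ := fun i => r i / g i
  let Hh := X.filter (fun J' => mty m g s J' = zd)
  let c : ℝ := Ssum s Hh * ρ zd + ∑ i ∈ fchFin m g r zd, SH m g r s X i * ρ i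
  if mty m g s J ∈ A m g r zd then
    if g zd ≤ SH m g r s X zd then s J * ρ zd
    else if r zd < c then
      if mty m g s J = zd then s J * ρ zd
      else
        s J * (ρ (chil m g r zd (mty m g s J)) -
          (ρ (chil m g r zd (mty m g s J)) - ρ zd) *
            ((c - r zd) /
              (∑ i ∈ fchFin m g r zd, ∑ J' ∈ H m g r s i X, s J' * (ρ i - ρ zd))))
    else
      if mty m g s J = zd then s J * ρ zd * (1 + (r zd - c) / (Ssum s Hh * ρ zd))
      else s J * ρ (chil m g r zd (mty m g s J))
  else s J * ρ (idxT m g r zd (mty m g s J))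

end

end BSHM

/-!
For `z ≠ z*` the term equals `f_z·r(z)/g(z)`, where `f_z` is the share of the budget
`cn_{z*}(z*)·g(z*)` that lands on the load `S(H_z)` when the loads of `T(z*)` are filled greedily
from the highest index down (`cn_{z*}(z)` buys exactly the uncovered rest of `S(H_z)`). These terms
are nonnegative and, as `r(z)/g(z) ≤ r(z*)/g(z*)` on `T(z*)`, at most `f_z·r(z*)/g(z*)`. The `z*`
term is `(S(H_{z*}) - cn_{z*}(z*)·g(z*))·r(z*)/g(z*) ∈ (-r(z*), 0]`. The nodes of `T(z*)` above
`z*` carry no jobs: every job type is at most `k0 ≤ z*`, and an ancestor chain cannot jump over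
`z*` without passing through it. So the filling first covers all of `S(H_{z*})`, and the remaining
shares add up to at most `cn_{z*}(z*)·g(z*) - S(H_{z*}) < g(z*)`.
-/

namespace BSHM

section ParentTree

variable {m : ℕ} {g r : ℕ → ℝ}

lemma p_mem_pset {i : ℕ} (h : pdef m g r i) : p m g r i ∈ pset m g r i :=
  Nat.sInf_mem h

lemma lt_p {i : ℕ} (h : pdef m g r i) : i < p m g r i :=
  (p_mem_pset h).2.1

lemma pdef_of_p_ne_zero {i : ℕ} (h : p m g r i ≠ 0) : pdef m g r i := by
  by_contra hd
  rw [pdef, Set.not_nonempty_iff_eq_empty] at hd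
  exact h (by rw [p, hd, Nat.sInf_empty])

lemma lt_p_of_p_eq {z zt : ℕ} (hd : pdef m g r z)
    (he : p m g r z = p m g r zt) : zt < p m g r z := by
  have hdt : pdef m g r zt := pdef_of_p_ne_zero (by have := lt_p hd; omega)
  exact he ▸ lt_p hdt

lemma le_of_mem_P {x z : ℕ} (h : z ∈ P m g r x) : x ≤ z := by
  induction h with
  | refl => exact le_rfl
  | tail _ hstep ih => exact ih.trans (hstep.2 ▸ lt_p hstep.1).le

lemma le_of_mem_P_of_le {x z : ℕ} (hx : x ≤ m) (h : z ∈ P m g r x) : z ≤ m := by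
  induction h with
  | refl => exact hx
  | tail _ hstep => exact hstep.2 ▸ (p_mem_pset hstep.1).1

lemma rho_le_of_mem_P {x z : ℕ} (h : z ∈ P m g r x) : r z / g z ≤ r x / g x := by
  induction h with
  | refl => exact le_rfl
  | tail _ hstep ih => exact (hstep.2 ▸ (p_mem_pset hstep.1).2.2).le.trans ih

theorem p_mem_P_of_le_of_lt {a x : ℕ} (hd : pdef m g r a) (hax : a ≤ x)
    (hx : x < p m g r a) : p m g r a ∈ P m g r x := by
  rcases hax.eq_or_lt with rfl | hax
  · exact .single ⟨hd, rfl⟩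
  have hxp : p m g r a ∈ pset m g r x := by
    refine ⟨(p_mem_pset hd).1, hx, (p_mem_pset hd).2.2.trans_le ?_⟩
    by_contra! h
    exact Nat.notMem_of_lt_sInf hx ⟨hx.le.trans (p_mem_pset hd).1, hax, h⟩
  have hdx : pdef m g r x := ⟨_, hxp⟩
  have hx_lt : x < p m g r x := lt_p hdx
  rcases (Nat.sInf_le hxp : p m g r x ≤ p m g r a).eq_or_lt with heq | hlt
  · exact heq ▸ .single ⟨hdx, rfl⟩
  · exact .head ⟨hdx, rfl⟩ (p_mem_P_of_le_of_lt hd (hax.le.trans hx_lt.le) hlt)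
termination_by p m g r a - x

theorem mem_P_of_mem_P_of_le_of_lt {w x z : ℕ} (hz : z ∈ P m g r w) (hw : w ≤ x)
    (hx : x < z) : z ∈ P m g r x := by
  induction hz using Relation.ReflTransGen.head_induction_on with
  | refl => omega
  | @head a c hstep htail ih =>
    rcases le_or_gt c x with hc | hc
    · exact ih hc
    · obtain ⟨hd, rfl⟩ := hstep
      exact (p_mem_P_of_le_of_lt hd hw hc).trans htail

lemma exists_of_mem_T {k z : ℕ} (hz : z ∈ T m g r k) (hne : z ≠ k) :
    ∃ zt ∈ P m g r k, z < zt ∧ p m g r z = p m g r zt := by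
  simp only [T, Set.mem_union, Set.mem_singleton_iff, Set.mem_iUnion] at hz
  rcases hz with rfl | ⟨zt, hzt, -, -, hlt, he⟩
  · exact absurd rfl hne
  · exact ⟨zt, hzt, hlt, he⟩

lemma not_mem_P_of_mem_T_of_lt {zs z : ℕ} (hz : z ∈ T m g r zs) (hlt : zs < z) :
    z ∉ P m g r zs := by
  intro hzP
  obtain ⟨zt, hzt, hzzt, he⟩ := exists_of_mem_T hz hlt.ne'
  rcases Relation.ReflTransGen.total_of_right_unique
      (fun _ _ _ hb hc => hb.2.trans hc.2.symm) hzP hzt with h | h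
  · rcases h.cases_head with rfl | ⟨b, ⟨hd, rfl⟩, hb⟩
    · omega
    · have := le_of_mem_P hb
      have := lt_p_of_p_eq hd he
      omega
  · have := le_of_mem_P h
    omega

lemma rho_le_of_mem_T {zs z : ℕ} (hzs : zs ≤ m) (hz : z ∈ T m g r zs) :
    r z / g z ≤ r zs / g zs := by
  rcases eq_or_ne z zs with rfl | hne
  · exact le_rfl
  obtain ⟨zt, hzt, hzzt, he⟩ := exists_of_mem_T hz hne
  refine le_trans ?_ (rho_le_of_mem_P hzt)
  by_contra! h
  have hmem : zt ∈ pset m g r z := ⟨le_of_mem_P_of_le hzs hzt, hzzt, h⟩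
  have := lt_p_of_p_eq ⟨_, hmem⟩ he
  have : p m g r z ≤ zt := Nat.sInf_le hmem
  omega

lemma mem_TIcc {k z : ℕ} :
    z ∈ TIcc m g r k ↔ (z = k ∨ 1 ≤ z ∧ z ≤ m) ∧ z ∈ T m g r k := by
  simp [TIcc]

lemma self_mem_TIcc (k : ℕ) : k ∈ TIcc m g r k :=
  mem_TIcc.2 ⟨.inl rfl, .inl rfl⟩

end ParentTree

section Jobs

variable {ι : Type*} {m : ℕ} {g r : ℕ → ℝ} {s : ι → ℝ} {X : Finset ι}

lemma mty_le (J : ι) : mty m g s J ≤ m := by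
  rcases {z | 1 ≤ z ∧ z ≤ m ∧ s J ≤ g z}.eq_empty_or_nonempty with h | h
  · simp [mty, h]
  · exact (Nat.sInf_mem h).2.1

lemma one_le_mty {J : ι} (hm : 1 ≤ m) (h : s J ≤ g m) : 1 ≤ mty m g s J :=
  (Nat.sInf_mem (⟨m, hm, le_rfl, h⟩ : {z | 1 ≤ z ∧ z ≤ m ∧ s J ≤ g z}.Nonempty)).1

lemma k0f_le : k0f m g s X ≤ m :=
  Finset.sup_le fun J _ => mty_le J

lemma one_le_k0f {J : ι} (hm : 1 ≤ m) (hJ : J ∈ X) (h : s J ≤ g m) : 1 ≤ k0f m g s X :=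
  (one_le_mty hm h).trans (Finset.le_sup hJ)

lemma SH_nonneg (hs : ∀ J ∈ X, 0 ≤ s J) (z : ℕ) : 0 ≤ SH m g r s X z :=
  Finset.sum_nonneg fun J hJ => hs J (Finset.mem_filter.1 hJ).1

lemma SH_eq_zero_of_mem_T_of_lt {zs z : ℕ} (hzs : zs ∈ P m g r (k0f m g s X))
    (hz : z ∈ T m g r zs) (hlt : zs < z) : SH m g r s X z = 0 := by
  refine Finset.sum_eq_zero fun J hJ => ?_
  obtain ⟨hJX, -, -, hzP⟩ := Finset.mem_filter.1 hJ
  have hJzs : mty m g s J ≤ zs := (Finset.le_sup hJX).trans (le_of_mem_P hzs)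
  exact absurd (mem_P_of_mem_P_of_le_of_lt hzP hJzs hlt) (not_mem_P_of_mem_T_of_lt hz hlt)

end Jobs

section GreedyFill

variable {α : Type*} [LinearOrder α]

lemma sum_filter_le_eq_add_sum_filter_lt {M : Type*} [AddCommMonoid M] (c : α → M)
    {A : Finset α} {i : α} (hi : i ∈ A) :
    ∑ z ∈ A.filter (fun z => i ≤ z), c z = c i + ∑ z ∈ A.filter (fun z => i < z), c z := by
  have : A.filter (fun z => i ≤ z) = insert i (A.filter (fun z => i < z)) := by
    ext z
    simp only [Finset.mem_filter, Finset.mem_insert, le_iff_eq_or_lt]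
    constructor
    · rintro ⟨hz, rfl | hlt⟩ <;> simp_all
    · rintro (rfl | ⟨hz, hlt⟩) <;> simp_all
  rw [this, Finset.sum_insert (by simp)]

lemma sum_sub_filter_le_filter_lt {M N : Type*} [AddCommMonoid M] [AddCommGroup N]
    (φ : M → N) (c : α → M) (A : Finset α) :
    ∑ i ∈ A, (φ (∑ z ∈ A.filter (fun z => i ≤ z), c z)
      - φ (∑ z ∈ A.filter (fun z => i < z), c z)) = φ (∑ z ∈ A, c z) - φ 0 := by
  classical
  induction A using Finset.induction_on_min with
  | empty => simp
  | insert a s hlt ih =>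
    have ha : a ∉ s := fun h => lt_irrefl a (hlt a h)
    have hle : (insert a s).filter (fun z => a ≤ z) = insert a s :=
      Finset.filter_true_of_mem fun z hz =>
        (Finset.mem_insert.1 hz).elim ge_of_eq fun h => (hlt z h).le
    have hlt' : (insert a s).filter (fun z => a < z) = s := by
      rw [Finset.filter_insert, if_neg (lt_irrefl a)]
      exact Finset.filter_true_of_mem hlt
    have hs : ∀ i ∈ s,
        (φ (∑ z ∈ (insert a s).filter (fun z => i ≤ z), c z)
          - φ (∑ z ∈ (insert a s).filter (fun z => i < z), c z))
        = φ (∑ z ∈ s.filter (fun z => i ≤ z), c z) - φ (∑ z ∈ s.filter (fun z => i < z), c z) := by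
      intro i hi
      rw [Finset.filter_insert, if_neg (hlt i hi).not_ge, Finset.filter_insert,
        if_neg (hlt i hi).not_gt]
    rw [Finset.sum_insert ha, hle, hlt', Finset.sum_congr rfl hs, ih, Finset.sum_insert ha]
    abel

/-- The share of a budget `B` that lands in bucket `i` when the buckets `c` of `A` are filled
greedily from the largest index down. -/
def fill (A : Finset α) (c : α → ℝ) (B : ℝ) (i : α) : ℝ :=
  min (c i) (max 0 (B - ∑ z ∈ A.filter (fun z => i < z), c z))

lemma fill_nonneg {A : Finset α} {c : α → ℝ} {B : ℝ} {i : α} (hc : 0 ≤ c i) :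
    0 ≤ fill A c B i :=
  le_min hc (le_max_left _ _)

lemma fill_eq_min_sub_min {A : Finset α} {c : α → ℝ} {B : ℝ} {i : α} (hi : i ∈ A)
    (hc : 0 ≤ c i) :
    fill A c B i = min B (∑ z ∈ A.filter (fun z => i ≤ z), c z)
      - min B (∑ z ∈ A.filter (fun z => i < z), c z) := by
  rw [fill, sum_filter_le_eq_add_sum_filter_lt c hi]
  set t := ∑ z ∈ A.filter (fun z => i < z), c z
  rcases le_total B t with h | h
  · rw [max_eq_left (by linarith : B - t ≤ 0), min_eq_right hc,
      min_eq_left (by linarith : B ≤ c i + t), min_eq_left h, sub_self]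
  · rw [max_eq_right (by linarith : 0 ≤ B - t), min_eq_right h]
    rcases le_total B (c i + t) with h' | h'
    · rw [min_eq_right (by linarith : B - t ≤ c i), min_eq_left h']
    · rw [min_eq_left (by linarith : c i ≤ B - t), min_eq_right h']
      ring

lemma sum_fill {A : Finset α} {c : α → ℝ} {B : ℝ} (hc : ∀ i ∈ A, 0 ≤ c i) (hB : 0 ≤ B) :
    ∑ i ∈ A, fill A c B i = min B (∑ z ∈ A, c z) := by
  rw [Finset.sum_congr rfl fun i hi => fill_eq_min_sub_min hi (hc i hi),
    sum_sub_filter_le_filter_lt (min B) c A, min_eq_right hB, sub_zero]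

lemma fill_eq_of_forall_lt {A : Finset α} {c : α → ℝ} {B : ℝ} {i : α}
    (hA : ∀ z ∈ A, i < z → c z = 0) (hB : c i ≤ B) : fill A c B i = c i := by
  rw [fill, Finset.sum_eq_zero fun z hz => hA z (Finset.mem_filter.1 hz).1
    (Finset.mem_filter.1 hz).2, sub_zero]
  exact min_eq_left (hB.trans (le_max_right _ _))

end GreedyFill

section Configuration

variable {ι : Type*} {m : ℕ} {g r : ℕ → ℝ} {s : ι → ℝ} {X : Finset ι}

lemma le_ceil_div_mul {x d : ℝ} (hd : 0 < d) : x ≤ (⌈x / d⌉₊ : ℝ) * d :=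
  (div_le_iff₀ hd).1 (Nat.le_ceil _)

lemma ceil_div_mul_lt {x d : ℝ} (hx : 0 ≤ x) (hd : 0 < d) : (⌈x / d⌉₊ : ℝ) * d < x + d := by
  have := mul_lt_mul_of_pos_right (Nat.ceil_lt_add_one (div_nonneg hx hd.le)) hd
  rwa [add_mul, div_mul_cancel₀ _ hd.ne', one_mul] at this

lemma cn_self (zs : ℕ) : cn m g r s X zs zs = ⌈SH m g r s X zs / g zs⌉₊ := by
  simp [cn]

lemma cn_mul_eq_sub_fill {zs i : ℕ} (hi : i ∈ TIcc m g r zs) (hne : i ≠ zs) (hgi : g i ≠ 0)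
    (hc : 0 ≤ SH m g r s X i) :
    cn m g r s X zs i * g i = SH m g r s X i
      - fill (TIcc m g r zs) (SH m g r s X) ((⌈SH m g r s X zs / g zs⌉₊ : ℝ) * g zs) i := by
  have hdec := sum_filter_le_eq_add_sum_filter_lt (SH m g r s X) hi
  simp only [cn, if_neg hne, if_pos (mem_TIcc.1 hi).2, fill]
  set B := (⌈SH m g r s X zs / g zs⌉₊ : ℝ) * g zs
  set t := ∑ z ∈ (TIcc m g r zs).filter (fun z => i < z), SH m g r s X z
  rw [hdec]
  split_ifs with h₁ h₂
  · rw [div_mul_cancel₀ _ hgi, max_eq_right (by linarith), min_eq_right (by linarith)]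
    ring
  · rw [div_mul_cancel₀ _ hgi, max_eq_left (by linarith), min_eq_right hc, sub_zero]
  · rw [max_eq_right (by linarith), min_eq_left (by push Not at h₁ h₂; linarith [h₁ h₂]),
      zero_mul, sub_self]

end Configuration

lemma abs_sum_lt_of_subset {α : Type*} [DecidableEq α] {L A : Finset α} {a : α} {f : α → ℝ}
    {R : ℝ} (hLA : L ⊆ A) (hf : ∀ x ∈ A.erase a, 0 ≤ f x) (hfa : -R < f a) (hfa' : f a ≤ 0)
    (hsum : ∑ x ∈ A.erase a, f x < R) : |∑ x ∈ L, f x| < R := by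
  have hsub : L.erase a ⊆ A.erase a := Finset.erase_subset_erase a hLA
  have h₀ : 0 ≤ ∑ x ∈ L.erase a, f x := Finset.sum_nonneg fun x hx => hf x (hsub hx)
  have h₁ : ∑ x ∈ L.erase a, f x < R :=
    (Finset.sum_le_sum_of_subset_of_nonneg hsub fun x hx _ => hf x hx).trans_lt hsum
  rw [abs_lt]
  by_cases haL : a ∈ L
  · rw [← Finset.sum_erase_add L f haL]
    constructor <;> linarith
  · rw [← Finset.erase_eq_of_notMem haL]
    constructor <;> linarith

lemma pos_of_strictMono_from_one {f : ℕ → ℝ} {m : ℕ} (h₁ : 0 < f 1)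
    (hf : ∀ i j, 1 ≤ i → i < j → j ≤ m → f i < f j) {z : ℕ} (hz : 1 ≤ z) (hzm : z ≤ m) :
    0 < f z := by
  rcases hz.eq_or_lt with rfl | h
  · exact h₁
  · exact h₁.trans (hf 1 z le_rfl h hzm)

section Bound

variable {ι : Type*} {m : ℕ} {g r : ℕ → ℝ} {s : ι → ℝ} {X : Finset ι} {zs : ℕ}

lemma term_eq_fill_mul {i : ℕ} (hi : i ∈ TIcc m g r zs) (hne : i ≠ zs) (hgi : g i ≠ 0)
    (hc : 0 ≤ SH m g r s X i) :
    SH m g r s X i * (r i / g i) - cn m g r s X zs i * r i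
      = fill (TIcc m g r zs) (SH m g r s X) ((⌈SH m g r s X zs / g zs⌉₊ : ℝ) * g zs) i
        * (r i / g i) := by
  rw [show cn m g r s X zs i * r i = cn m g r s X zs i * g i * (r i / g i) by field_simp,
    cn_mul_eq_sub_fill hi hne hgi hc]
  ring

lemma term_self_mem_Ioc (hg : 0 < g zs) (hr : 0 < r zs) (hc : 0 ≤ SH m g r s X zs) :
    SH m g r s X zs * (r zs / g zs) - cn m g r s X zs zs * r zs ∈ Set.Ioc (-r zs) 0 := by
  set c := SH m g r s X zs
  have hB : c ≤ (⌈c / g zs⌉₊ : ℝ) * g zs := le_ceil_div_mul hg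
  have hB' : (⌈c / g zs⌉₊ : ℝ) * g zs < c + g zs := ceil_div_mul_lt hc hg
  have hρ : 0 < r zs / g zs := div_pos hr hg
  rw [cn_self, show c * (r zs / g zs) - ⌈c / g zs⌉₊ * r zs
      = (c - ⌈c / g zs⌉₊ * g zs) * (r zs / g zs) by field_simp]
  constructor
  · rw [show -r zs = -g zs * (r zs / g zs) by field_simp]
    exact mul_lt_mul_of_pos_right (by linarith) hρ
  · exact mul_nonpos_of_nonpos_of_nonneg (by linarith) hρ.le

lemma sum_erase_term_lt (hs : ∀ J ∈ X, 0 ≤ s J) (hzs : zs ∈ P m g r (k0f m g s X))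
    (hzsm : zs ≤ m) (hpos : ∀ z ∈ TIcc m g r zs, 0 < g z ∧ 0 < r z) :
    ∑ z ∈ (TIcc m g r zs).erase zs, (SH m g r s X z * (r z / g z) - cn m g r s X zs z * r z)
      < r zs := by
  set c := SH m g r s X
  set B := (⌈c zs / g zs⌉₊ : ℝ) * g zs
  have hc : ∀ z, 0 ≤ c z := SH_nonneg hs
  obtain ⟨hgzs, hrzs⟩ := hpos zs (self_mem_TIcc zs)
  have hB : c zs ≤ B := le_ceil_div_mul hgzs
  have hB' : B < c zs + g zs := ceil_div_mul_lt (hc zs) hgzs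
  calc ∑ z ∈ (TIcc m g r zs).erase zs, (c z * (r z / g z) - cn m g r s X zs z * r z)
      = ∑ z ∈ (TIcc m g r zs).erase zs, fill (TIcc m g r zs) c B z * (r z / g z) :=
        Finset.sum_congr rfl fun z hz => term_eq_fill_mul (Finset.mem_of_mem_erase hz)
          (Finset.ne_of_mem_erase hz) (hpos z (Finset.mem_of_mem_erase hz)).1.ne' (hc z)
    _ ≤ ∑ z ∈ (TIcc m g r zs).erase zs, fill (TIcc m g r zs) c B z * (r zs / g zs) :=
        Finset.sum_le_sum fun z hz => mul_le_mul_of_nonneg_left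
          (rho_le_of_mem_T hzsm (mem_TIcc.1 (Finset.mem_of_mem_erase hz)).2) (fill_nonneg (hc z))
    _ = (min B (∑ z ∈ TIcc m g r zs, c z) - c zs) * (r zs / g zs) := by
        rw [← Finset.sum_mul, Finset.sum_erase_eq_sub (self_mem_TIcc zs),
          sum_fill (fun z _ => hc z) ((hc zs).trans hB), fill_eq_of_forall_lt
            (fun z hz hlt => SH_eq_zero_of_mem_T_of_lt hzs (mem_TIcc.1 hz).2 hlt) hB]
    _ ≤ (B - c zs) * (r zs / g zs) := by gcongr; exact min_le_left _ _
    _ < g zs * (r zs / g zs) := by gcongr; linarith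
    _ = r zs := mul_div_cancel₀ _ hgzs.ne'

end Bound

/-- For every `z* ∈ P(k0)` and all `z0, z1 ∈ T(z*)` with
`z0 ≤ z1`:
`|∑_{z ∈ T(z*), z0 ≤ z ≤ z1} (S(H_z)·r z/g z − cn_{z*}(z)·r z)| < r z*`. -/
theorem statement_8 {ι : Type*} (m : ℕ) (g r : ℕ → ℝ) (s : ι → ℝ) (𝒥 : Finset ι)
    (hm : 1 ≤ m)
    (hg1 : 0 < g 1) (hr1 : 0 < r 1)
    (hg : ∀ i j, 1 ≤ i → i < j → j ≤ m → g i < g j)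
    (hr : ∀ i j, 1 ≤ i → i < j → j ≤ m → r i < r j)
    (hJ : 𝒥.Nonempty)
    (hs : ∀ J ∈ 𝒥, 0 < s J ∧ s J ≤ g m) :
    ∀ zs ∈ P m g r (k0f m g s 𝒥),
      ∀ z0 ∈ T m g r zs, ∀ z1 ∈ T m g r zs, z0 ≤ z1 →
        |∑ z ∈ (TIcc m g r zs).filter (fun z => z0 ≤ z ∧ z ≤ z1),
            (SH m g r s 𝒥 z * (r z / g z) - cn m g r s 𝒥 zs z * r z)|
          < r zs := by
  intro zs hzs z0 _ z1 _ _
  obtain ⟨J, hJ𝒥⟩ := hJ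
  have hs₀ : ∀ J ∈ 𝒥, 0 ≤ s J := fun J hJ => (hs J hJ).1.le
  have hzs₁ : 1 ≤ zs := (one_le_k0f hm hJ𝒥 (hs J hJ𝒥).2).trans (le_of_mem_P hzs)
  have hzsm : zs ≤ m := le_of_mem_P_of_le k0f_le hzs
  have hpos : ∀ z ∈ TIcc m g r zs, 0 < g z ∧ 0 < r z := by
    intro z hz
    obtain ⟨h₁, h₂⟩ : 1 ≤ z ∧ z ≤ m := (mem_TIcc.1 hz).1.elim (· ▸ ⟨hzs₁, hzsm⟩) id
    exact ⟨pos_of_strictMono_from_one hg1 hg h₁ h₂, pos_of_strictMono_from_one hr1 hr h₁ h₂⟩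
  obtain ⟨hgzs, hrzs⟩ := hpos zs (self_mem_TIcc zs)
  obtain ⟨hlow, hnonpos⟩ := term_self_mem_Ioc hgzs hrzs (SH_nonneg hs₀ zs)
  refine abs_sum_lt_of_subset (Finset.filter_subset _ _) (fun z hz => ?_) hlow hnonpos
    (sum_erase_term_lt hs₀ hzs hzsm hpos)
  obtain ⟨hne, hz⟩ := Finset.mem_erase.1 hz
  obtain ⟨hgz, hrz⟩ := hpos z hz
  rw [term_eq_fill_mul hz hne hgz.ne' (SH_nonneg hs₀ z)]
  exact mul_nonneg (fill_nonneg (SH_nonneg hs₀ z)) (div_pos hrz hgz).le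

end BSHM
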